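/- Let A = (a_{j,k}) and B = (b_{j,k}) be 2n×2n complex matrices partitioned into 2×2 blocks, both of Type-I. Let x₁, …, x_n be independent identically distributed 2×2 random quaternion blocks x_j = [[α_j, β_j], [−conj(β_j), conj(α_j)]] with E x_j = 0, E|α_j|² = E|β_j|² = 1/2, E α_j² = E β_j² = 0, E(α_j β_j) = E(α_j conj(β_j)) = 0. Then E[ Σ_{j ≠ k} tr(a_{j,k} x_k x_j*) tr(b_{k,j} x_j x_k*) ] = (1/2) tr(A B) − (1/4) Σ_{j=1}^n tr(a_{j,j}) tr(b_{j,j}). -/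

import Mathlib

open MeasureTheory ProbabilityTheory Matrix

/-- The `(j,k)` `2×2` block of a `m × m` matrix; junk value `0` out of range. -/
noncomputable def blk {m : ℕ} (A : Matrix (Fin m) (Fin m) ℂ) (j k : ℕ) :
    Matrix (Fin 2) (Fin 2) ℂ := fun p q =>
  if h : 2 * j + (p : ℕ) < m ∧ 2 * k + (q : ℕ) < m then
    A ⟨2 * j + (p : ℕ), h.1⟩ ⟨2 * k + (q : ℕ), h.2⟩ else 0

/-- The `j`-th `2×2` block of a `m × 2` matrix (rows `2j, 2j+1`); junk value `0` out of
range. -/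
noncomputable def vblk {m : ℕ} (X : Matrix (Fin m) (Fin 2) ℂ) (j : ℕ) :
    Matrix (Fin 2) (Fin 2) ℂ := fun p q =>
  if h : 2 * j + (p : ℕ) < m then X ⟨2 * j + (p : ℕ), h⟩ q else 0

/-- `‖q‖_Q²` for a quaternion `q = [[α, β], [-conj β, conj α]]`. -/
noncomputable def qSq (q : Matrix (Fin 2) (Fin 2) ℂ) : ℝ := ‖q 0 0‖ ^ 2 + ‖q 0 1‖ ^ 2

/-- A `2×2` complex matrix has quaternion form `[[α, β], [-conj β, conj α]]`. -/
def IsQuaternionBlock (q : Matrix (Fin 2) (Fin 2) ℂ) : Prop :=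
  q 1 0 = -starRingEnd ℂ (q 0 1) ∧ q 1 1 = starRingEnd ℂ (q 0 0)

/-- A `2n × 2n` complex matrix, partitioned into `2×2` blocks `a_{j,k}`, is of Type-I if
each diagonal block is a scalar matrix `t_j I₂` and, for `j < k`, whenever
`a_{j,k} = [[a, b], [c, d]]` then `a_{k,j} = [[d, -b], [-c, a]]`. -/
def IsTypeI {n : ℕ} (A : Matrix (Fin (2 * n)) (Fin (2 * n)) ℂ) : Prop :=
  (∀ j < n, blk A j j 0 1 = 0 ∧ blk A j j 1 0 = 0 ∧ blk A j j 0 0 = blk A j j 1 1) ∧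
  (∀ j k, j < k → k < n →
    blk A k j 0 0 = blk A j k 1 1 ∧ blk A k j 0 1 = -blk A j k 0 1 ∧
    blk A k j 1 0 = -blk A j k 1 0 ∧ blk A k j 1 1 = blk A j k 0 0)

/-!
Expand both traces in the entries of `x_k` and `x_j`. For `j ≠ k` independence factorises the
expectation of every term into a second moment of `x_k` times one of `x_j`, and the moment
hypotheses say exactly that the entries of a quaternion block are uncorrelated with variance
`1/2`: `E[x_{pq} conj x_{rs}] = δ_{pr} δ_{qs} / 2`. Hence each off-diagonal pair contributes
`(1/2)(1/2)·2·tr(a_{jk} b_{kj})`. Summing over all `j, k` gives `(1/2) tr(AB)`, and the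
missing diagonal terms are `(1/2) tr(a_{jj} b_{jj}) = (1/4) tr(a_{jj}) tr(b_{jj})` because `a_{jj}`
is scalar.
-/

open scoped ComplexConjugate

section BlockTrace

/-- Sends `(j, p)` to the row index `2 * j + p`. -/
def blockEquiv (n : ℕ) : Fin n × Fin 2 ≃ Fin (2 * n) :=
  finProdFinEquiv.trans (finCongr (Nat.mul_comm n 2))

theorem blk_apply {n : ℕ} (M : Matrix (Fin (2 * n)) (Fin (2 * n)) ℂ) (j k : Fin n)
    (p q : Fin 2) : blk M j k p q = M (blockEquiv n (j, p)) (blockEquiv n (k, q)) := by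
  have hj : 2 * (j : ℕ) + p < 2 * n := by omega
  have hk : 2 * (k : ℕ) + q < 2 * n := by omega
  rw [blk, dif_pos ⟨hj, hk⟩]
  congr 1 <;> ext <;> simp [blockEquiv] <;> ring

theorem trace_mul_eq_sum_trace_blk {n : ℕ} (A B : Matrix (Fin (2 * n)) (Fin (2 * n)) ℂ) :
    trace (A * B) = ∑ j : Fin n, ∑ k : Fin n, trace (blk A j k * blk B k j) := by
  simp only [trace, diag, mul_apply, Fin.sum_univ_two, blk_apply]
  rw [← (blockEquiv n).sum_comp]
  simp only [← (blockEquiv n).sum_comp (fun l => A _ l * B l _), Fintype.sum_prod_type,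
    Fin.sum_univ_two, Finset.sum_add_distrib]
  ring

theorem trace_mul_of_scalar {a : Matrix (Fin 2) (Fin 2) ℂ} (h01 : a 0 1 = 0) (h10 : a 1 0 = 0)
    (h : a 0 0 = a 1 1) (b : Matrix (Fin 2) (Fin 2) ℂ) :
    trace (a * b) = 1 / 2 * (trace a * trace b) := by
  simp only [trace, diag, mul_apply, Fin.sum_univ_two, h01, h10, h]
  ring

theorem sum_offDiag_trace_blk {n : ℕ} {A : Matrix (Fin (2 * n)) (Fin (2 * n)) ℂ}
    (B : Matrix (Fin (2 * n)) (Fin (2 * n)) ℂ)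
    (hA : ∀ j < n, blk A j j 0 1 = 0 ∧ blk A j j 1 0 = 0 ∧ blk A j j 0 0 = blk A j j 1 1) :
    ∑ j : Fin n, ∑ k ∈ Finset.univ.erase j, 1 / 2 * trace (blk A j k * blk B k j) =
      1 / 2 * trace (A * B) - 1 / 4 * ∑ j : Fin n, trace (blk A j j) * trace (blk B j j) := by
  have diag : ∀ j : Fin n, trace (blk A j j * blk B j j) =
      1 / 2 * (trace (blk A j j) * trace (blk B j j)) := fun j => by
    obtain ⟨h01, h10, h⟩ := hA j j.isLt
    exact trace_mul_of_scalar h01 h10 h _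
  rw [trace_mul_eq_sum_trace_blk, Finset.mul_sum, Finset.mul_sum, ← Finset.sum_sub_distrib]
  refine Finset.sum_congr rfl fun j _ => ?_
  rw [Finset.sum_erase_eq_sub (Finset.mem_univ j), ← Finset.mul_sum, diag]
  ring

end BlockTrace

section TraceExpansion

variable {ι : Type*} [Fintype ι]

theorem trace_mul_mul_conjTranspose (a u v : Matrix ι ι ℂ) :
    trace (a * (u * vᴴ)) =
      ∑ t : ι × ι × ι, a t.1 t.2.1 * u t.2.1 t.2.2 * conj (v t.1 t.2.2) := by
  simp [trace, mul_apply, Fintype.sum_prod_type, Finset.mul_sum, mul_assoc]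

theorem trace_mul_trace_eq_sum (a b u v : Matrix ι ι ℂ) :
    trace (a * (u * vᴴ)) * trace (b * (v * uᴴ)) =
      ∑ t : ι × ι × ι, ∑ t' : ι × ι × ι, a t.1 t.2.1 * b t'.1 t'.2.1 *
        ((u t.2.1 t.2.2 * conj (u t'.1 t'.2.2)) * (v t'.2.1 t'.2.2 * conj (v t.1 t.2.2))) := by
  rw [trace_mul_mul_conjTranspose, trace_mul_mul_conjTranspose, Finset.sum_mul_sum]
  exact Finset.sum_congr rfl fun _ _ => Finset.sum_congr rfl fun _ _ => by ring

theorem sum_mul_ite_mul_ite [DecidableEq ι] (a b : Matrix ι ι ℂ) (c d : ℂ) :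
    ∑ t : ι × ι × ι, ∑ t' : ι × ι × ι, a t.1 t.2.1 * b t'.1 t'.2.1 *
        ((if t.2.1 = t'.1 ∧ t.2.2 = t'.2.2 then c else 0) *
          (if t'.2.1 = t.1 ∧ t'.2.2 = t.2.2 then d else 0)) =
      c * d * Fintype.card ι * trace (a * b) := by
  simp [Fintype.sum_prod_type, ite_and, trace, mul_apply, Finset.mul_sum]
  exact Finset.sum_congr rfl fun _ _ => Finset.sum_congr rfl fun _ _ => by ring

end TraceExpansion

section Moments

variable {Ω : Type*} [MeasurableSpace Ω] {μ : Measure Ω}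

theorem MeasureTheory.MemLp.integrable_mul_conj {f g : Ω → ℂ} (hf : MemLp f 2 μ)
    (hg : MemLp g 2 μ) : Integrable (fun ω => f ω * conj (g ω)) μ :=
  hf.integrable_mul hg.star

theorem integral_mul_conj_of_isQuaternionBlock {f : Ω → Matrix (Fin 2) (Fin 2) ℂ}
    (hf : ∀ ω, IsQuaternionBlock (f ω))
    (hαα : ∫ ω, ‖f ω 0 0‖ ^ 2 ∂μ = 1 / 2) (hββ : ∫ ω, ‖f ω 0 1‖ ^ 2 ∂μ = 1 / 2)
    (hα2 : ∫ ω, f ω 0 0 ^ 2 ∂μ = 0) (hβ2 : ∫ ω, f ω 0 1 ^ 2 ∂μ = 0)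
    (hαβ : ∫ ω, f ω 0 0 * f ω 0 1 ∂μ = 0) (hαβ' : ∫ ω, f ω 0 0 * conj (f ω 0 1) ∂μ = 0)
    (p q r s : Fin 2) :
    ∫ ω, f ω p q * conj (f ω r s) ∂μ = if p = r ∧ q = s then (1 / 2 : ℂ) else 0 := by
  have h10 : ∀ ω, f ω 1 0 = -conj (f ω 0 1) := fun ω => (hf ω).1
  have h11 : ∀ ω, f ω 1 1 = conj (f ω 0 0) := fun ω => (hf ω).2
  have integral_conj' : ∀ g : Ω → ℂ, ∫ ω, conj (g ω) ∂μ = conj (∫ ω, g ω ∂μ) :=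
    fun g => integral_conj
  have variance : ∀ g : Ω → ℂ, ∫ ω, ‖g ω‖ ^ 2 ∂μ = 1 / 2 →
      ∫ ω, g ω * conj (g ω) ∂μ = 1 / 2 := fun g h => by
    simp only [Complex.mul_conj']
    norm_cast
    rw [h]
    norm_num
  have hβα' : ∫ ω, f ω 0 1 * conj (f ω 0 0) ∂μ = 0 := by
    rw [← map_zero (starRingEnd ℂ), ← hαβ', ← integral_conj']
    simp [mul_comm]
  simp only [sq] at hα2 hβ2
  -- By `h10`, `h11` each of the sixteen moments is, up to sign and conjugation, one of the six
  -- above.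
  fin_cases p <;> fin_cases q <;> fin_cases r <;> fin_cases s <;>
    simp [h10, h11, integral_neg, ← map_mul, integral_conj', mul_comm, variance _ hαα,
      variance _ hββ, hα2, hβ2, hαβ, hαβ', hβα']

variable {ι : Type*} {X Y : Ω → Matrix ι ι ℂ}

theorem ProbabilityTheory.IndepFun.mul_conj_entries
    (hXY : IndepFun (fun ω p q => X ω p q) (fun ω p q => Y ω p q) μ)
    (p q r s p' q' r' s' : ι) :
    IndepFun (fun ω => X ω p q * conj (X ω r s))
      (fun ω => Y ω p' q' * conj (Y ω r' s')) μ := by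
  have entry : ∀ p q : ι, Measurable fun M : ι → ι → ℂ => M p q :=
    fun p q => (measurable_pi_apply q).comp (measurable_pi_apply p)
  have hconj := Complex.continuous_conj.measurable
  exact hXY.comp ((entry p q).mul (hconj.comp (entry r s)))
    ((entry p' q').mul (hconj.comp (entry r' s')))

theorem integrable_trace_mul_trace_of_indepFun [Fintype ι]
    (hXY : IndepFun (fun ω p q => X ω p q) (fun ω p q => Y ω p q) μ)
    (hX : ∀ p q, MemLp (fun ω => X ω p q) 2 μ) (hY : ∀ p q, MemLp (fun ω => Y ω p q) 2 μ)
    (a b : Matrix ι ι ℂ) :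
    Integrable (fun ω => trace (a * (X ω * (Y ω)ᴴ)) * trace (b * (Y ω * (X ω)ᴴ))) μ := by
  simp only [trace_mul_trace_eq_sum]
  refine integrable_finsetSum _ fun t _ => integrable_finsetSum _ fun t' _ =>
    Integrable.const_mul ?_ _
  exact (hXY.mul_conj_entries _ _ _ _ _ _ _ _).integrable_mul
    ((hX _ _).integrable_mul_conj (hX _ _)) ((hY _ _).integrable_mul_conj (hY _ _))

theorem integral_trace_mul_trace_of_indepFun [Fintype ι] [DecidableEq ι]
    (hXY : IndepFun (fun ω p q => X ω p q) (fun ω p q => Y ω p q) μ)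
    (hX : ∀ p q, MemLp (fun ω => X ω p q) 2 μ) (hY : ∀ p q, MemLp (fun ω => Y ω p q) 2 μ)
    {c d : ℂ}
    (hXc : ∀ p q r s, ∫ ω, X ω p q * conj (X ω r s) ∂μ = if p = r ∧ q = s then c else 0)
    (hYd : ∀ p q r s, ∫ ω, Y ω p q * conj (Y ω r s) ∂μ = if p = r ∧ q = s then d else 0)
    (a b : Matrix ι ι ℂ) :
    ∫ ω, trace (a * (X ω * (Y ω)ᴴ)) * trace (b * (Y ω * (X ω)ᴴ)) ∂μ =
      c * d * Fintype.card ι * trace (a * b) := by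
  have hint : ∀ t t' : ι × ι × ι, Integrable (fun ω => (X ω t.2.1 t.2.2 * conj (X ω t'.1 t'.2.2)) *
      (Y ω t'.2.1 t'.2.2 * conj (Y ω t.1 t.2.2))) μ :=
    fun t t' => (hXY.mul_conj_entries _ _ _ _ _ _ _ _).integrable_mul
      ((hX _ _).integrable_mul_conj (hX _ _)) ((hY _ _).integrable_mul_conj (hY _ _))
  have hterm : ∀ t t' : ι × ι × ι, ∫ ω, a t.1 t.2.1 * b t'.1 t'.2.1 *
      ((X ω t.2.1 t.2.2 * conj (X ω t'.1 t'.2.2)) *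
        (Y ω t'.2.1 t'.2.2 * conj (Y ω t.1 t.2.2))) ∂μ
      = a t.1 t.2.1 * b t'.1 t'.2.1 * ((if t.2.1 = t'.1 ∧ t.2.2 = t'.2.2 then c else 0) *
          (if t'.2.1 = t.1 ∧ t'.2.2 = t.2.2 then d else 0)) := fun t t' => by
    rw [integral_const_mul, (hXY.mul_conj_entries _ _ _ _ _ _ _ _).integral_fun_mul_eq_mul_integral
      ((hX _ _).integrable_mul_conj (hX _ _)).1 ((hY _ _).integrable_mul_conj (hY _ _)).1,
      hXc, hYd]
  simp only [trace_mul_trace_eq_sum]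
  rw [integral_finsetSum _ fun t _ => integrable_finsetSum _ fun t' _ => (hint t t').const_mul _,
    ← sum_mul_ite_mul_ite]
  refine Finset.sum_congr rfl fun t _ => ?_
  rw [integral_finsetSum _ fun t' _ => (hint t t').const_mul _]
  exact Finset.sum_congr rfl fun t' _ => hterm t t'

end Moments

theorem offdiagonal_quadratic_sum_swapped_general
    {Ω : Type} [MeasurableSpace Ω] (P : Measure Ω)
    (n : ℕ) (A B : Matrix (Fin (2 * n)) (Fin (2 * n)) ℂ)
    (hA : IsTypeI A)
    (x : Fin n → Ω → Matrix (Fin 2) (Fin 2) ℂ)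
    (hquat : ∀ ω j, IsQuaternionBlock (x j ω))
    (hindep : iIndepFun (m := fun _ => MeasurableSpace.pi)
      (fun (j : Fin n) (ω : Ω) (p q : Fin 2) => x j ω p q) P)
    (hL2 : ∀ (j : Fin n) (p q : Fin 2), MemLp (fun ω => x j ω p q) 2 P)
    (hαβ : ∀ j : Fin n,
      (∫ ω, ‖x j ω 0 0‖ ^ 2 ∂P = 1 / 2) ∧
      (∫ ω, ‖x j ω 0 1‖ ^ 2 ∂P = 1 / 2) ∧
      (∫ ω, (x j ω 0 0) ^ 2 ∂P = 0) ∧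
      (∫ ω, (x j ω 0 1) ^ 2 ∂P = 0) ∧
      (∫ ω, x j ω 0 0 * x j ω 0 1 ∂P = 0) ∧
      (∫ ω, x j ω 0 0 * starRingEnd ℂ (x j ω 0 1) ∂P = 0)) :
    ∫ ω, ∑ j : Fin n, ∑ k ∈ Finset.univ.erase j,
        Matrix.trace (blk A j k * (x k ω * (x j ω)ᴴ)) *
          Matrix.trace (blk B k j * (x j ω * (x k ω)ᴴ)) ∂P
      = (1 / 2) * Matrix.trace (A * B) -
        (1 / 4) * ∑ j : Fin n, Matrix.trace (blk A j j) * Matrix.trace (blk B j j) := by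
  have moments : ∀ j p q r s, ∫ ω, x j ω p q * conj (x j ω r s) ∂P =
      if p = r ∧ q = s then (1 / 2 : ℂ) else 0 := fun j => by
    obtain ⟨hαα, hββ, hα2, hβ2, hαβ₁, hαβ₂⟩ := hαβ j
    exact integral_mul_conj_of_isQuaternionBlock (hquat · j) hαα hββ hα2 hβ2 hαβ₁ hαβ₂
  have pair : ∀ j : Fin n, ∀ k ∈ Finset.univ.erase j, ∫ ω,
      trace (blk A j k * (x k ω * (x j ω)ᴴ)) * trace (blk B k j * (x j ω * (x k ω)ᴴ)) ∂P =
        1 / 2 * trace (blk A j k * blk B k j) := fun j k hk => by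
    rw [integral_trace_mul_trace_of_indepFun (hindep.indepFun (Finset.ne_of_mem_erase hk))
      (hL2 k) (hL2 j) (moments k) (moments j)]
    norm_num
  have pair_integrable : ∀ j : Fin n, ∀ k ∈ Finset.univ.erase j, Integrable (fun ω =>
      trace (blk A j k * (x k ω * (x j ω)ᴴ)) * trace (blk B k j * (x j ω * (x k ω)ᴴ))) P :=
    fun j k hk => integrable_trace_mul_trace_of_indepFun
      (hindep.indepFun (Finset.ne_of_mem_erase hk)) (hL2 k) (hL2 j) _ _
  rw [integral_finsetSum _ fun j _ => integrable_finsetSum _ (pair_integrable j),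
    ← sum_offDiag_trace_blk B hA.1]
  refine Finset.sum_congr rfl fun j _ => ?_
  rw [integral_finsetSum _ (pair_integrable j)]
  exact Finset.sum_congr rfl (pair j)

/-- For Type-I matrices `A`, `B` and i.i.d. random quaternion blocks `x₁, …, x_n` with the
standard moment structure,
`E[Σ_{j≠k} tr(a_{jk} x_k x_j*) tr(b_{kj} x_j x_k*)] = (1/2) tr(AB) - (1/4) Σ_j tr(a_jj) tr(b_jj)`. -/
theorem offdiagonal_quadratic_sum_swapped
    {Ω : Type} [MeasurableSpace Ω] (P : Measure Ω) [IsProbabilityMeasure P]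
    (n : ℕ) (A B : Matrix (Fin (2 * n)) (Fin (2 * n)) ℂ)
    (hA : IsTypeI A) (hB : IsTypeI B)
    (x : Fin n → Ω → Matrix (Fin 2) (Fin 2) ℂ)
    (hmeas : ∀ (j : Fin n) (p q : Fin 2), Measurable fun ω => x j ω p q)
    (hquat : ∀ ω j, IsQuaternionBlock (x j ω))
    (hindep : iIndepFun (m := fun _ => MeasurableSpace.pi)
      (fun (j : Fin n) (ω : Ω) (p q : Fin 2) => x j ω p q) P)
    (hident : ∀ j k : Fin n,
      IdentDistrib (fun ω (p q : Fin 2) => x j ω p q)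
        (fun ω (p q : Fin 2) => x k ω p q) P P)
    (hL2 : ∀ (j : Fin n) (p q : Fin 2), MemLp (fun ω => x j ω p q) 2 P)
    (hmean : ∀ (j : Fin n) (p q : Fin 2), ∫ ω, x j ω p q ∂P = 0)
    (hαβ : ∀ j : Fin n,
      (∫ ω, ‖x j ω 0 0‖ ^ 2 ∂P = 1 / 2) ∧
      (∫ ω, ‖x j ω 0 1‖ ^ 2 ∂P = 1 / 2) ∧
      (∫ ω, (x j ω 0 0) ^ 2 ∂P = 0) ∧
      (∫ ω, (x j ω 0 1) ^ 2 ∂P = 0) ∧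
      (∫ ω, x j ω 0 0 * x j ω 0 1 ∂P = 0) ∧
      (∫ ω, x j ω 0 0 * starRingEnd ℂ (x j ω 0 1) ∂P = 0)) :
    ∫ ω, ∑ j : Fin n, ∑ k ∈ Finset.univ.erase j,
        Matrix.trace (blk A j k * (x k ω * (x j ω)ᴴ)) *
          Matrix.trace (blk B k j * (x j ω * (x k ω)ᴴ)) ∂P
      = (1 / 2) * Matrix.trace (A * B) -
        (1 / 4) * ∑ j : Fin n, Matrix.trace (blk A j j) * Matrix.trace (blk B j j) :=
  offdiagonal_quadratic_sum_swapped_general P n A B hA x hquat hindep hL2 hαβ
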